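/- Let k be a field of characteristic p > 0. The p-permutation dimension of the cyclic group C_p over k equals p - 2 when p is odd, and 0 when p = 2. That is, every finitely generated kC_p-module admits a permutation resolution of length at most max(p-2, 0), and for odd p the module k[T]/T^{(p+1)/2} admits no shorter resolution than p - 2. -/

import Mathlib

open Polynomial

noncomputable section

/-- `Mmod k i` is the `k[T]`-module `M_i = k[T]/(T^i)`. -/
abbrev Mmod (k : Type) [Field k] (i : ℕ) : Type :=
  Polynomial k ⧸ Ideal.span {(X : Polynomial k) ^ i}

/-- A permutation `kC_p`-module: a direct sum of copies of `kC_p = k[T]/T^p`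
and the trivial module `k = k[T]/T`. -/
def IsPermMod (k : Type) [Field k] (p : ℕ) (M : Type) [AddCommGroup M]
    [Module (Polynomial k) M] : Prop :=
  ∃ r s : ℕ,
    Nonempty (M ≃ₗ[Polynomial k] ((Fin r → Mmod k p) × (Fin s → Mmod k 1)))

/-- `m` has depth `i`: `m ∈ T^i M` but `m ∉ T^{i+1} M`. -/
def HasDepth (k : Type) [Field k] {M : Type} [AddCommGroup M] [Module (Polynomial k) M]
    (i : ℕ) (m : M) : Prop :=
  (∃ y : M, m = (X : Polynomial k) ^ i • y) ∧ ¬ ∃ y : M, m = (X : Polynomial k) ^ (i + 1) • y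

/-- `α` is the nilpotency index of `m` with respect to `T`. -/
def IsIndex (k : Type) [Field k] {M : Type} [AddCommGroup M] [Module (Polynomial k) M]
    (α : ℕ) (m : M) : Prop :=
  (X : Polynomial k) ^ α • m = 0 ∧ ∀ β < α, (X : Polynomial k) ^ β • m ≠ 0

/-- `M` admits a resolution `0 → P_s → ⋯ → P_0 → M → 0` by permutation `kC_p`-modules. -/
def HasPermRes (k : Type) [Field k] (p : ℕ) :
    (s : ℕ) → (M : Type) → [AddCommGroup M] → [Module (Polynomial k) M] → Prop
  | 0, M, _, _ => IsPermMod k p M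
  | (s + 1), M, _, _ =>
      ∃ (P : Type) (_ : AddCommGroup P) (_ : Module (Polynomial k) P)
        (f : P →ₗ[Polynomial k] M), IsPermMod k p P ∧ Function.Surjective f ∧
          HasPermRes k p s (LinearMap.ker f)

/-- The `p`-permutation dimension of `M`: minimal length of a permutation resolution. -/
def ppdim (k : Type) [Field k] (p : ℕ) (M : Type) [AddCommGroup M]
    [Module (Polynomial k) M] : ℕ :=
  sInf {s | HasPermRes k p s M}

/-- The `p`-distance function: `f 1 = f p = 0` and
`f x = min (f (p-x)) (f (p-x+1)) + 1` for `2 ≤ x ≤ p-1`. -/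
def IsSizeFun (p : ℕ) (f : ℕ → ℕ) : Prop :=
  f 1 = 0 ∧ f p = 0 ∧ ∀ x, 2 ≤ x → x ≤ p - 1 → f x = min (f (p - x)) (f (p - x + 1)) + 1

/-! Every finitely generated module killed by `X ^ p` is a finite product of cyclic modules
`M_x = k[X]/(X^x)` with `x ≤ p`. For `2 ≤ x ≤ p - 1` the short exact sequences
`0 → M_{p-x} → M_p → M_x → 0` and `0 → M_{p-x+1} → M_p × M_1 → M_x → 0` continue a resolution
of `M_x` by one of `M_{p-x}`, `M_{p-x+1}`, which yields resolutions of length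
`sizeFun p x ≤ p - 2`.

For the lower bound, call `n ∈ M` a socle element of depth `i` if `X n = 0` and
`n ∈ X^i M \ X^(i+1) M`. Permutation modules have none with `1 ≤ i ≤ p - 2`. If `M` has one,
`n = X^i f(u)` with `f : P → M` a surjection from a permutation module, then `X^(p-1) u`
is a socle element of depth `p - i - 2` or `p - i - 1` of `ker f`. Following the socle along a
resolution shows that its length is at least `sizeFun p (i + 1)`, which for
`M_{(p+1)/2}` and `i = (p-1)/2` is `p - 2`.
-/

theorem Function.Exact.prodMap {M N P M' N' P' : Type*} [Zero P] [Zero P'] {f : M → N}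
    {g : N → P} {f' : M' → N'} {g' : N' → P'} (h : Function.Exact f g)
    (h' : Function.Exact f' g') : Function.Exact (Prod.map f f') (Prod.map g g') := by
  rintro ⟨y, y'⟩
  rw [Set.range_prodMap, Set.mem_prod, ← h y, ← h' y']
  exact Prod.mk_eq_zero

variable {k : Type} [Field k]

namespace Mmod

theorem mk_eq_zero_iff {n : ℕ} {f : k[X]} :
    (Submodule.Quotient.mk f : Mmod k n) = 0 ↔ X ^ n ∣ f := by
  rw [Submodule.Quotient.mk_eq_zero, Ideal.mem_span_singleton]

theorem smul_mk {n : ℕ} (r f : k[X]) :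
    r • (Submodule.Quotient.mk f : Mmod k n) = Submodule.Quotient.mk (r * f) :=
  rfl

theorem pow_smul_eq_zero {n m : ℕ} (h : n ≤ m) (c : Mmod k n) : (X : k[X]) ^ m • c = 0 := by
  obtain ⟨f, rfl⟩ := Submodule.Quotient.mk_surjective _ c
  rw [smul_mk, mk_eq_zero_iff]
  exact (pow_dvd_pow X h).mul_right f

theorem exists_eq_pow_smul_of_pow_smul_eq_zero {n j : ℕ} (hj : j ≤ n) {c : Mmod k n}
    (hc : (X : k[X]) ^ j • c = 0) : ∃ q : Mmod k n, c = (X : k[X]) ^ (n - j) • q := by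
  obtain ⟨f, rfl⟩ := Submodule.Quotient.mk_surjective _ c
  rw [smul_mk, mk_eq_zero_iff] at hc
  obtain ⟨g, hg⟩ := hc
  refine ⟨Submodule.Quotient.mk g, ?_⟩
  rw [smul_mk]
  congr 1
  refine mul_left_cancel₀ (pow_ne_zero j X_ne_zero) ?_
  rw [hg, ← mul_assoc, ← pow_add, Nat.add_sub_cancel' hj]

instance : Subsingleton (Mmod k 0) := by
  simp only [Mmod, pow_zero, Ideal.span_singleton_one]
  infer_instance

def mulXPow (j : ℕ) {a b : ℕ} (h : b ≤ j + a) : Mmod k a →ₗ[k[X]] Mmod k b :=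
  Submodule.mapQ _ _ ((X : k[X]) ^ j • LinearMap.id) <|
    (Submodule.span_singleton_le_iff_mem _ _).mpr <| Ideal.mem_span_singleton.mpr <| by
      simpa [← pow_add, add_comm] using pow_dvd_pow (X : k[X]) h

theorem mulXPow_mk (j : ℕ) {a b : ℕ} (h : b ≤ j + a) (f : k[X]) :
    mulXPow j h (Submodule.Quotient.mk f) = Submodule.Quotient.mk (X ^ j * f) :=
  rfl

theorem mulXPow_injective {j a b : ℕ} (h : b = j + a) :
    Function.Injective (mulXPow (k := k) j h.le) := by
  refine (injective_iff_map_eq_zero _).mpr fun c hc => ?_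
  obtain ⟨f, rfl⟩ := Submodule.Quotient.mk_surjective _ c
  rw [mulXPow_mk, mk_eq_zero_iff, h, pow_add] at hc
  exact mk_eq_zero_iff.mpr ((mul_dvd_mul_iff_left (pow_ne_zero j X_ne_zero)).mp hc)

theorem exact_mulXPow_mulXPow {x p : ℕ} (hx : x ≤ p) :
    Function.Exact (mulXPow (k := k) x (a := p - x) (b := p) (by omega))
      (mulXPow 0 (a := p) (b := x) (by omega)) := by
  intro c
  obtain ⟨f, rfl⟩ := Submodule.Quotient.mk_surjective _ c
  rw [mulXPow_mk, pow_zero, one_mul, mk_eq_zero_iff]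
  constructor
  · rintro ⟨g, rfl⟩
    exact ⟨Submodule.Quotient.mk g, mulXPow_mk _ _ _⟩
  · rintro ⟨c, hc⟩
    obtain ⟨g, rfl⟩ := Submodule.Quotient.mk_surjective _ c
    rw [mulXPow_mk, Submodule.Quotient.eq, Ideal.mem_span_singleton] at hc
    exact (dvd_sub_right (dvd_mul_right _ g)).mp ((pow_dvd_pow X hx).trans hc)

theorem exact_mulXPow_prod_coprod {y p : ℕ} (hy : y + 1 ≤ p) :
    Function.Exact
      ((mulXPow (k := k) y (a := p - y) (b := p) (by omega)).prod (-mulXPow 0 (b := 1) (by omega)))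
      ((mulXPow 0 (a := p) (b := y + 1) (by omega)).coprod (mulXPow y (by omega))) := by
  rintro ⟨a, b⟩
  obtain ⟨f, rfl⟩ := Submodule.Quotient.mk_surjective _ a
  obtain ⟨g, rfl⟩ := Submodule.Quotient.mk_surjective _ b
  simp only [LinearMap.coprod_apply, LinearMap.prod_apply, Function.prod_apply,
    LinearMap.neg_apply, mulXPow_mk, ← Submodule.Quotient.mk_add, mk_eq_zero_iff, Set.mem_range]
  constructor
  · rintro ⟨d, hd⟩
    refine ⟨Submodule.Quotient.mk (X * d - g), ?_⟩
    simp only [mulXPow_mk, ← Submodule.Quotient.mk_neg, Prod.mk.injEq, Submodule.Quotient.eq,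
      Ideal.mem_span_singleton]
    exact ⟨⟨0, by linear_combination -hd⟩, ⟨-d, by ring⟩⟩
  · rintro ⟨c, hc⟩
    obtain ⟨h, rfl⟩ := Submodule.Quotient.mk_surjective _ c
    simp only [mulXPow_mk, ← Submodule.Quotient.mk_neg, Prod.mk.injEq,
      Submodule.Quotient.eq, Ideal.mem_span_singleton] at hc
    obtain ⟨⟨u, hu⟩, ⟨v, hv⟩⟩ := hc
    have hp : (X : k[X]) ^ p = X ^ (y + 1) * X ^ (p - y - 1) := by
      rw [← pow_add]; congr 1; omega
    exact ⟨-(X ^ (p - y - 1) * u) - v, by linear_combination -hu - X ^ y * hv - u * hp⟩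

end Mmod

variable {p : ℕ} {M N P : Type} [AddCommGroup M] [Module k[X] M] [AddCommGroup N]
  [Module k[X] N] [AddCommGroup P] [Module k[X] P]

theorem X_pow_smul_X_pow_smul {a b c : ℕ} (h : a + b = c) (m : M) :
    (X : k[X]) ^ a • (X : k[X]) ^ b • m = (X : k[X]) ^ c • m := by
  rw [smul_smul, ← pow_add, h]

theorem X_smul_X_pow_smul (b : ℕ) (m : M) :
    (X : k[X]) • (X : k[X]) ^ b • m = (X : k[X]) ^ (b + 1) • m := by
  rw [smul_smul, ← pow_succ']

namespace IsPermMod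

theorem of_equiv (e : M ≃ₗ[k[X]] N) (h : IsPermMod k p M) : IsPermMod k p N := by
  obtain ⟨r, s, ⟨e'⟩⟩ := h
  exact ⟨r, s, ⟨e.symm.trans e'⟩⟩

theorem of_subsingleton [Subsingleton M] : IsPermMod k p M :=
  ⟨0, 0, ⟨LinearEquiv.ofSubsingleton _ _⟩⟩

theorem mmod_self : IsPermMod k p (Mmod k p) :=
  ⟨1, 0, ⟨(LinearEquiv.funUnique (Fin 1) k[X] (Mmod k p)).symm.trans
    LinearEquiv.prodUnique.symm⟩⟩

theorem mmod_one : IsPermMod k p (Mmod k 1) :=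
  ⟨0, 1, ⟨(LinearEquiv.funUnique (Fin 1) k[X] (Mmod k 1)).symm.trans
    LinearEquiv.uniqueProd.symm⟩⟩

theorem prod (hM : IsPermMod k p M) (hN : IsPermMod k p N) : IsPermMod k p (M × N) := by
  obtain ⟨r, s, ⟨e⟩⟩ := hM
  obtain ⟨r', s', ⟨e'⟩⟩ := hN
  have append {n n' : ℕ} (A : Type) [AddCommGroup A] [Module k[X] A] :
      ((Fin n → A) × (Fin n' → A)) ≃ₗ[k[X]] (Fin (n + n') → A) :=
    (LinearEquiv.sumArrowLequivProdArrow _ _ _ _).symm.trans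
      (LinearEquiv.funCongrLeft _ _ finSumFinEquiv.symm)
  exact ⟨r + r', s + s', ⟨(e.prodCongr e').trans <|
    (LinearEquiv.prodProdProdComm _ _ _ _ _).trans ((append _).prodCongr (append _))⟩⟩

theorem pow_smul_eq_zero (h : IsPermMod k p P) (hp : 1 ≤ p) (v : P) :
    (X : k[X]) ^ p • v = 0 := by
  obtain ⟨r, s, ⟨e⟩⟩ := h
  refine e.injective ?_
  rw [map_smul, map_zero]
  ext i
  · exact Mmod.pow_smul_eq_zero le_rfl _
  · exact Mmod.pow_smul_eq_zero hp _

theorem exists_X_smul_eq_of_pow_smul_eq_zero (h : IsPermMod k p P) {j : ℕ} (hj : j ≤ p)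
    {v : P} (hv : (X : k[X]) ^ j • v = 0) :
    ∃ q : P, (X : k[X]) • v = (X : k[X]) ^ (p - j + 1) • q := by
  obtain ⟨r, s, ⟨e⟩⟩ := h
  have hev : (X : k[X]) ^ j • e v = 0 := by rw [← map_smul, hv, map_zero]
  choose q hq using fun i =>
    Mmod.exists_eq_pow_smul_of_pow_smul_eq_zero hj (congrFun (congrArg Prod.fst hev) i)
  refine ⟨e.symm (q, 0), e.injective ?_⟩
  rw [map_smul, map_smul, e.apply_symm_apply]
  ext i
  · change (X : k[X]) • (e v).1 i = (X : k[X]) ^ (p - j + 1) • q i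
    rw [hq i, X_smul_X_pow_smul]
  · change (X : k[X]) • (e v).2 i = (X : k[X]) ^ (p - j + 1) • (0 : Mmod k 1)
    simpa using Mmod.pow_smul_eq_zero (m := 1) le_rfl ((e v).2 i)

end IsPermMod

namespace HasPermRes

variable {s : ℕ}

theorem of_equiv (e : M ≃ₗ[k[X]] N) (h : HasPermRes k p s M) : HasPermRes k p s N := by
  induction s generalizing M N with
  | zero => exact IsPermMod.of_equiv e h
  | succ s ih =>
    obtain ⟨Q, _, _, f, hQ, hf, hK⟩ := h
    exact ⟨Q, _, _, e.toLinearMap ∘ₗ f, hQ, e.surjective.comp hf,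
      (LinearEquiv.ker_comp e f).symm ▸ hK⟩

theorem of_isPermMod (h : IsPermMod k p M) : HasPermRes k p s M := by
  induction s generalizing M with
  | zero => exact h
  | succ s ih =>
    have : Subsingleton (LinearMap.ker (LinearMap.id : M →ₗ[k[X]] M)) := by
      rw [LinearMap.ker_id]; infer_instance
    exact ⟨M, _, _, LinearMap.id, h, Function.surjective_id, ih IsPermMod.of_subsingleton⟩

theorem succ_of_exact (hP : IsPermMod k p P) {g : N →ₗ[k[X]] P} {f : P →ₗ[k[X]] M}
    (hg : Function.Injective g) (hgf : Function.Exact g f) (hf : Function.Surjective f)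
    (hN : HasPermRes k p s N) : HasPermRes k p (s + 1) M :=
  ⟨P, _, _, f, hP, hf, hN.of_equiv <| (LinearEquiv.ofInjective g hg).trans
    (LinearEquiv.ofEq _ _ hgf.linearMap_ker_eq.symm)⟩

theorem succ (h : HasPermRes k p s M) : HasPermRes k p (s + 1) M := by
  induction s generalizing M with
  | zero => exact of_isPermMod h
  | succ s ih =>
    obtain ⟨Q, _, _, f, hQ, hf, hK⟩ := h
    exact ⟨Q, _, _, f, hQ, hf, ih hK⟩

theorem mono {t : ℕ} (h : HasPermRes k p s M) (hst : s ≤ t) : HasPermRes k p t M :=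
  Nat.le_induction h (fun _ _ => succ) t hst

theorem prod (hM : HasPermRes k p s M) (hN : HasPermRes k p s N) :
    HasPermRes k p s (M × N) := by
  induction s generalizing M N with
  | zero => exact IsPermMod.prod hM hN
  | succ s ih =>
    obtain ⟨Q, _, _, f, hQ, hf, hK⟩ := hM
    obtain ⟨Q', _, _, f', hQ', hf', hK'⟩ := hN
    exact succ_of_exact (hQ.prod hQ')
      (g := (LinearMap.ker f).subtype.prodMap (LinearMap.ker f').subtype) (f := f.prodMap f')
      (Subtype.val_injective.prodMap Subtype.val_injective)
      ((LinearMap.exact_subtype_ker_map f).prodMap (LinearMap.exact_subtype_ker_map f'))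
      (hf.prodMap hf') (ih hK hK')

theorem pi {ι : Type} [Fintype ι] {N : ι → Type} [∀ i, AddCommGroup (N i)]
    [∀ i, Module k[X] (N i)] (h : ∀ i, HasPermRes k p s (N i)) :
    HasPermRes k p s (∀ i, N i) := by
  refine Fintype.induction_empty_option (P := fun ι _ => ∀ (N : ι → Type)
    [∀ i, AddCommGroup (N i)] [∀ i, Module k[X] (N i)], (∀ i, HasPermRes k p s (N i)) →
      HasPermRes k p s (∀ i, N i)) ?_ ?_ ?_ ι N h
  · intro α β _ e hα N _ _ h
    exact (hα (fun a => N (e a)) fun a => h (e a)).of_equiv (LinearEquiv.piCongrLeft k[X] N e)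
  · intro N _ _ _
    exact of_isPermMod IsPermMod.of_subsingleton
  · intro α _ hα N _ _ h
    exact ((h none).prod (hα _ fun a => h (some a))).of_equiv
      (LinearEquiv.piOptionEquivProd k[X]).symm

end HasPermRes

-- The closed-form solution of the recursion `IsSizeFun p`; it vanishes at `x ∈ {0, 1, p}`.
def sizeFun (p x : ℕ) : ℕ := if 2 * x ≤ p then 2 * x - 2 else 2 * (p - x) - 1

theorem sizeFun_le {x : ℕ} (hx : x ≤ p) : sizeFun p x ≤ p - 2 := by
  unfold sizeFun; split_ifs <;> omega

namespace Mmod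

theorem mulXPow_zero_surjective {a b : ℕ} (h : b ≤ 0 + a) :
    Function.Surjective (mulXPow (k := k) 0 h) := fun c => by
  obtain ⟨f, rfl⟩ := Submodule.Quotient.mk_surjective _ c
  exact ⟨Submodule.Quotient.mk f, by rw [mulXPow_mk, pow_zero, one_mul]⟩

theorem hasPermRes_sizeFun {x : ℕ} (hx : x ≤ p) :
    HasPermRes k p (sizeFun p x) (Mmod k x) := by
  rcases Nat.lt_or_ge x 2 with hx2 | hx2
  · interval_cases x
    · exact .of_isPermMod .of_subsingleton
    · exact .of_isPermMod .mmod_one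
  rcases hx.eq_or_lt with rfl | hxp
  · exact .of_isPermMod .mmod_self
  obtain ⟨y, rfl⟩ : ∃ y, x = y + 1 := ⟨x - 1, by omega⟩
  rcases le_or_gt (2 * (y + 1)) p with h | h
  · rw [show sizeFun p (y + 1) = sizeFun p (p - y) + 1 by unfold sizeFun; split_ifs <;> omega]
    refine .succ_of_exact (IsPermMod.mmod_self.prod .mmod_one)
      (fun a b hab => mulXPow_injective (by omega) (congrArg Prod.fst hab))
      (exact_mulXPow_prod_coprod (by omega)) (fun c => ?_) (hasPermRes_sizeFun (by omega))
    obtain ⟨a, rfl⟩ := mulXPow_zero_surjective (a := p) (b := y + 1) (by omega) c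
    exact ⟨(a, 0), by simp⟩
  · rw [show sizeFun p (y + 1) = sizeFun p (p - (y + 1)) + 1 by
      unfold sizeFun; split_ifs <;> omega]
    exact .succ_of_exact .mmod_self (mulXPow_injective (by omega)) (exact_mulXPow_mulXPow hx)
      (mulXPow_zero_surjective _) (hasPermRes_sizeFun (by omega))
termination_by sizeFun p x
decreasing_by all_goals unfold sizeFun; split_ifs <;> omega

theorem exists_linearEquiv_quotient_span {a : k[X]} (ha : a ∣ X ^ p) :
    ∃ d ≤ p, Nonempty ((k[X] ⧸ Submodule.span k[X] {a}) ≃ₗ[k[X]] Mmod k d) := by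
  obtain ⟨d, hd, hassoc⟩ := (dvd_prime_pow prime_X p).mp ha
  exact ⟨d, hd,
    ⟨Submodule.quotEquivOfEq _ _ (Ideal.span_singleton_eq_span_singleton.mpr hassoc)⟩⟩

end Mmod

theorem exists_linearEquiv_pi_mmod [Module.Finite k[X] M]
    (hM : ∀ m : M, (X : k[X]) ^ p • m = 0) :
    ∃ (ι : Type) (_ : Fintype ι) (d : ι → ℕ), (∀ i, d i ≤ p) ∧
      Nonempty (M ≃ₗ[k[X]] ∀ i, Mmod k (d i)) := by
  classical
  obtain ⟨ι, _, q, -, e, ⟨E⟩⟩ := Module.equiv_directSum_of_isTorsion fun m =>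
    ⟨⟨X ^ p, mem_nonZeroDivisors_of_ne_zero (pow_ne_zero _ X_ne_zero)⟩, hM m⟩
  have hdvd (i : ι) : q i ^ e i ∣ X ^ p := by
    have h := congrArg (fun x => E x i)
      (hM (E.symm (DirectSum.lof k[X] ι _ i (Submodule.Quotient.mk 1))))
    simp only [map_smul, E.apply_symm_apply, map_zero, DirectSum.smul_apply, DirectSum.lof_apply,
      DirectSum.zero_apply] at h
    rw [← Submodule.Quotient.mk_smul, Submodule.Quotient.mk_eq_zero,
      Submodule.mem_span_singleton] at h
    obtain ⟨r, hr⟩ := h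
    exact Dvd.intro_left r (by simpa using hr)
  choose d hd E' using fun i => Mmod.exists_linearEquiv_quotient_span (hdvd i)
  exact ⟨ι, inferInstance, d, hd, ⟨E.trans <|
    (DirectSum.linearEquivFunOnFintype k[X] ι _).trans
      (LinearEquiv.piCongrRight fun i => (E' i).some)⟩⟩

theorem hasPermRes_sub_two_of_finite [Module.Finite k[X] M]
    (hM : ∀ m : M, (X : k[X]) ^ p • m = 0) :
    HasPermRes k p (p - 2) M := by
  obtain ⟨ι, _, d, hd, ⟨e⟩⟩ := exists_linearEquiv_pi_mmod hM
  exact (HasPermRes.pi fun i =>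
    (Mmod.hasPermRes_sizeFun (hd i)).mono (sizeFun_le (hd i))).of_equiv e.symm

theorem hasDepth_or_hasDepth_succ_or {a : ℕ} {n : M} (h : ∃ y, n = (X : k[X]) ^ a • y) :
    HasDepth k a n ∨ HasDepth k (a + 1) n ∨ ∃ y, n = (X : k[X]) ^ (a + 2) • y := by
  unfold HasDepth
  by_cases h₁ : ∃ y, n = (X : k[X]) ^ (a + 1) • y <;> tauto

def HasSocleDepth (k : Type) [Field k] (i : ℕ) (M : Type) [AddCommGroup M] [Module k[X] M] :
    Prop :=
  ∃ n : M, (X : k[X]) • n = 0 ∧ HasDepth k i n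

theorem HasSocleDepth.of_equiv {i : ℕ} (e : M ≃ₗ[k[X]] N) (h : HasSocleDepth k i M) :
    HasSocleDepth k i N := by
  obtain ⟨_, hXn, ⟨y, rfl⟩, hn⟩ := h
  refine ⟨e (X ^ i • y), by rw [← map_smul, hXn, map_zero], ⟨e y, map_smul _ _ _⟩, ?_⟩
  rintro ⟨z, hz⟩
  exact hn ⟨e.symm z, e.injective (by rw [hz, map_smul, e.apply_symm_apply])⟩

theorem Mmod.hasSocleDepth (x : ℕ) : HasSocleDepth k x (Mmod k (x + 1)) := by
  refine ⟨X ^ x • Submodule.Quotient.mk 1, ?_, ⟨_, rfl⟩, ?_⟩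
  · rw [X_smul_X_pow_smul, Mmod.pow_smul_eq_zero le_rfl]
  · rintro ⟨y, hy⟩
    rw [Mmod.pow_smul_eq_zero le_rfl, Mmod.smul_mk, mul_one, Mmod.mk_eq_zero_iff,
      pow_dvd_pow_iff X_ne_zero not_isUnit_X] at hy
    omega

theorem IsPermMod.not_hasSocleDepth (h : IsPermMod k p P) {i : ℕ} (hi : 1 ≤ i)
    (hip : i + 2 ≤ p) : ¬ HasSocleDepth k i P := by
  rintro ⟨_, hXn, ⟨y, rfl⟩, hn⟩
  obtain ⟨q, hq⟩ := h.exists_X_smul_eq_of_pow_smul_eq_zero (j := 2)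
    (v := (X : k[X]) ^ (i - 1) • y) (by omega) (by
      rw [X_pow_smul_X_pow_smul (c := i + 1) (by omega), ← X_smul_X_pow_smul, hXn])
  refine hn ⟨(X : k[X]) ^ (p - i - 2) • q, ?_⟩
  rw [X_pow_smul_X_pow_smul (show i + 1 + (p - i - 2) = p - 2 + 1 by omega), ← hq,
    X_smul_X_pow_smul, Nat.sub_add_cancel hi]

theorem HasSocleDepth.ker_of_surjective (hP : IsPermMod k p P) {f : P →ₗ[k[X]] M}
    (hf : Function.Surjective f) {i : ℕ} (hi : 1 ≤ i) (hip : i + 2 ≤ p)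
    (h : HasSocleDepth k i M) :
    HasSocleDepth k (p - i - 2) (LinearMap.ker f) ∨
      HasSocleDepth k (p - i - 1) (LinearMap.ker f) := by
  obtain ⟨_, hXn, ⟨m, rfl⟩, hn⟩ := h
  obtain ⟨u, rfl⟩ := hf m
  have hw : (X : k[X]) ^ (i + 1) • u ∈ LinearMap.ker f := by
    rw [LinearMap.mem_ker, map_smul, ← X_smul_X_pow_smul, hXn]
  set σ : LinearMap.ker f := (X : k[X]) ^ (p - i - 2) • ⟨_, hw⟩
  have hσ : (σ : P) = (X : k[X]) ^ (p - 1) • u := X_pow_smul_X_pow_smul (by omega) u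
  have hXσ : (X : k[X]) • σ = 0 := Subtype.ext <| by
    rw [Submodule.coe_smul, hσ, X_smul_X_pow_smul, Nat.sub_add_cancel (by omega),
      hP.pow_smul_eq_zero (by omega), Submodule.coe_zero]
  rcases hasDepth_or_hasDepth_succ_or (n := σ) ⟨_, rfl⟩ with hσd | hσd | ⟨z, hz⟩
  · exact .inl ⟨σ, hXσ, hσd⟩
  · exact .inr ⟨σ, hXσ, by rwa [show p - i - 1 = p - i - 2 + 1 by omega]⟩
  · -- `X ^ (i - 1) • u - z` is killed by `X ^ (p - i)`, so in the permutation module `P`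
    -- its `X`-multiple lies in `X ^ (i + 1) • P`; applying `f` contradicts the depth `i`.
    exfalso
    have hz' : (X : k[X]) ^ (p - 1) • u = (X : k[X]) ^ (p - i) • (z : P) := by
      rw [← hσ, show p - i = p - i - 2 + 2 by omega]
      exact congrArg Subtype.val hz
    obtain ⟨q, hq⟩ := hP.exists_X_smul_eq_of_pow_smul_eq_zero (j := p - i)
      (v := (X : k[X]) ^ (i - 1) • u - z) (by omega) (by
        rw [smul_sub, X_pow_smul_X_pow_smul (show p - i + (i - 1) = p - 1 by omega), hz', sub_self])
    refine hn ⟨f q, ?_⟩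
    have := congrArg f hq
    rwa [smul_sub, X_smul_X_pow_smul, Nat.sub_add_cancel hi, map_sub, map_smul, map_smul,
      LinearMap.mem_ker.mp z.2, smul_zero, sub_zero, map_smul,
      show p - (p - i) + 1 = i + 1 by omega] at this

theorem HasPermRes.sizeFun_le {s i : ℕ} (h : HasPermRes k p s M) (hM : HasSocleDepth k i M) :
    sizeFun p (i + 1) ≤ s := by
  induction s generalizing M i with
  | zero =>
    by_contra hpos
    have hi : 1 ≤ i ∧ i + 2 ≤ p := by unfold sizeFun at hpos; split_ifs at hpos <;> omega
    exact IsPermMod.not_hasSocleDepth h hi.1 hi.2 hM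
  | succ s ih =>
    by_cases hi : 1 ≤ i ∧ i + 2 ≤ p
    · obtain ⟨P, _, _, f, hP, hf, hK⟩ := h
      rcases hM.ker_of_surjective hP hf hi.1 hi.2 with hK' | hK' <;>
      · have := ih hK hK'
        unfold sizeFun at this ⊢
        split_ifs at this ⊢ <;> omega
    · unfold sizeFun; split_ifs <;> omega

theorem stmt15_general (k : Type) [Field k] (p : ℕ) :
    (∀ (M : Type) [AddCommGroup M] [Module (Polynomial k) M],
      Module.Finite (Polynomial k) M → (∀ m : M, (X : Polynomial k) ^ p • m = 0) →
        HasPermRes k p (max (p - 2) 0) M ∧ ppdim k p M ≤ max (p - 2) 0) ∧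
      (Odd p → ppdim k p (Mmod k ((p + 1) / 2)) = p - 2) := by
  refine ⟨fun M _ _ _ hM => ?_, fun ⟨c, hc⟩ => ?_⟩
  · have h := hasPermRes_sub_two_of_finite hM
    rw [max_eq_left (Nat.zero_le _)]
    exact ⟨h, Nat.sInf_le h⟩
  · rw [show (p + 1) / 2 = c + 1 by omega]
    have hsize : sizeFun p (c + 1) = p - 2 := by unfold sizeFun; split_ifs <;> omega
    have h := Mmod.hasPermRes_sizeFun (k := k) (x := c + 1) (p := p) (by omega)
    rw [hsize] at h
    exact le_antisymm (Nat.sInf_le h)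
      (le_csInf ⟨_, h⟩ fun s hs => hsize ▸ hs.sizeFun_le (Mmod.hasSocleDepth c))

/-- The `p`-permutation dimension of `C_p` over a field of characteristic `p` is
`p - 2` for odd `p` and `0` for `p = 2`: every finitely generated `kC_p`-module has a
permutation resolution of length at most `max (p-2) 0`, and for odd `p` the module
`k[T]/T^{(p+1)/2}` admits no resolution shorter than `p - 2`. -/
theorem stmt15 (k : Type) [Field k] (p : ℕ) (hp : p.Prime) [CharP k p] :
    (∀ (M : Type) [AddCommGroup M] [Module (Polynomial k) M],
      Module.Finite (Polynomial k) M → (∀ m : M, (X : Polynomial k) ^ p • m = 0) →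
        HasPermRes k p (max (p - 2) 0) M ∧ ppdim k p M ≤ max (p - 2) 0) ∧
      (Odd p → ppdim k p (Mmod k ((p + 1) / 2)) = p - 2) :=
  stmt15_general k p
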